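/- arXiv:1711.05956 — 3 statements merged into one kernel-verified Lean document; each statement's English description precedes it below -/
import Mathlib

section
/- Let X be a real Hilbert space, ε > 0, h ∈ X, and suppose φ̂ is a minimizer over X of J(φ) = (1/2)∫₀ᵇ w(s)‖B*(s)φ‖² ds + ε‖φ‖ − ⟨φ, h⟩, where w(s) ≥ 0 and B*(s) are bounded linear operators from X to a Hilbert space U. Then for every ψ ∈ X, |∫₀ᵇ w(s)⟨B*(s)φ̂, B*(s)ψ⟩ ds − ⟨ψ, h⟩| ≤ ε‖ψ‖. -/
open MeasureTheory intervalIntegral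
open scoped RealInnerProductSpace

/-- Variational inequality satisfied by a minimizer of
J(φ) = (1/2)∫₀ᵇ w(s)‖B*(s)φ‖² ds + ε‖φ‖ − ⟨φ,h⟩. -/
theorem minimizer_variational_inequality
    {X U : Type*} [NormedAddCommGroup X] [InnerProductSpace ℝ X] [CompleteSpace X]
    [NormedAddCommGroup U] [InnerProductSpace ℝ U] [CompleteSpace U]
    (b : ℝ) (hb : 0 < b) (ε : ℝ) (hε : 0 < ε) (h : X)
    (w : ℝ → ℝ) (hw : ∀ s ∈ Set.Icc 0 b, 0 ≤ w s)
    (Bs : ℝ → X →L[ℝ] U)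
    (hint : ∀ φ ψ : X, IntervalIntegrable (fun s => w s * ⟪Bs s φ, Bs s ψ⟫) volume 0 b)
    (J : X → ℝ)
    (hJ : ∀ φ, J φ = (1 / 2) * (∫ s in (0:ℝ)..b, w s * ‖Bs s φ‖ ^ 2) + ε * ‖φ‖ - ⟪φ, h⟫)
    (φhat : X) (hmin : ∀ φ : X, J φhat ≤ J φ) :
    ∀ ψ : X, |(∫ s in (0:ℝ)..b, w s * ⟪Bs s φhat, Bs s ψ⟫) - ⟪ψ, h⟫| ≤ ε * ‖ψ‖ := by
  intro ψ
  set A := ∫ s in (0:ℝ)..b, w s * ⟪Bs s φhat, Bs s ψ⟫ with hA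
  set C := ∫ s in (0:ℝ)..b, w s * ⟪Bs s ψ, Bs s ψ⟫ with hC
  set D := ⟪ψ, h⟫ with hD
  have hC0 : 0 ≤ C := by
    refine intervalIntegral.integral_nonneg hb.le fun s hs => ?_
    exact mul_nonneg (hw s hs) real_inner_self_nonneg
  -- main step : J(φ̂ + λψ) ≥ J(φ̂) gives a quadratic inequality in λ
  have step : ∀ lam : ℝ, 0 ≤ lam * (A - D) + lam ^ 2 * (C / 2) + ε * (|lam| * ‖ψ‖) := by
    intro lam
    have expand : (∫ s in (0:ℝ)..b, w s * ‖Bs s (φhat + lam • ψ)‖ ^ 2)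
        = (∫ s in (0:ℝ)..b, w s * ‖Bs s φhat‖ ^ 2) + (2 * lam) * A + lam ^ 2 * C := by
      have hpt : ∀ s : ℝ, w s * ‖Bs s (φhat + lam • ψ)‖ ^ 2
          = w s * ‖Bs s φhat‖ ^ 2 + (2 * lam) * (w s * ⟪Bs s φhat, Bs s ψ⟫)
            + lam ^ 2 * (w s * ⟪Bs s ψ, Bs s ψ⟫) := by
        intro s
        have e0 : ‖Bs s (φhat + lam • ψ)‖ ^ 2
            = ⟪Bs s (φhat + lam • ψ), Bs s (φhat + lam • ψ)⟫ :=
          (real_inner_self_eq_norm_sq _).symm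
        have e1 : ‖Bs s φhat‖ ^ 2 = ⟪Bs s φhat, Bs s φhat⟫ :=
          (real_inner_self_eq_norm_sq _).symm
        rw [e0, e1, map_add, _root_.map_smul, real_inner_add_add_self, real_inner_smul_right,
          real_inner_smul_left, real_inner_smul_right]
        ring
      have i0 : IntervalIntegrable (fun s => w s * ‖Bs s φhat‖ ^ 2) volume 0 b := by
        have := hint φhat φhat
        simpa [real_inner_self_eq_norm_sq] using this
      have i1 : IntervalIntegrable
          (fun s => (2 * lam) * (w s * ⟪Bs s φhat, Bs s ψ⟫)) volume 0 b :=
        (hint φhat ψ).const_mul _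
      have i2 : IntervalIntegrable
          (fun s => lam ^ 2 * (w s * ⟪Bs s ψ, Bs s ψ⟫)) volume 0 b :=
        (hint ψ ψ).const_mul _
      simp only [hpt]
      rw [intervalIntegral.integral_add (i0.add i1) i2,
        intervalIntegral.integral_add i0 i1,
        intervalIntegral.integral_const_mul, intervalIntegral.integral_const_mul]
    have hmin' := hmin (φhat + lam • ψ)
    rw [hJ, hJ, expand] at hmin'
    have hinner : ⟪φhat + lam • ψ, h⟫ = ⟪φhat, h⟫ + lam * D := by
      rw [inner_add_left, real_inner_smul_left]
    rw [hinner] at hmin'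
    have hnorm : ‖φhat + lam • ψ‖ ≤ ‖φhat‖ + |lam| * ‖ψ‖ := by
      calc ‖φhat + lam • ψ‖ ≤ ‖φhat‖ + ‖lam • ψ‖ := norm_add_le _ _
        _ = ‖φhat‖ + |lam| * ‖ψ‖ := by rw [norm_smul, Real.norm_eq_abs]
    have hmul := mul_le_mul_of_nonneg_left hnorm hε.le
    linarith
  -- divide by t and let t → 0
  have key : ∀ t : ℝ, 0 < t → |A - D| ≤ ε * ‖ψ‖ + t * (C / 2) := by
    intro t ht
    have h1 := step t
    have h2 := step (-t)
    rw [abs_of_pos ht] at h1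
    rw [abs_neg, abs_of_pos ht] at h2
    rw [abs_le]
    constructor <;> nlinarith
  refine le_of_forall_pos_le_add fun δ hδ => ?_
  have hden : (0:ℝ) < C / 2 + 1 := by linarith
  have htpos : 0 < δ / (C / 2 + 1) := div_pos hδ hden
  calc |A - D| ≤ ε * ‖ψ‖ + (δ / (C / 2 + 1)) * (C / 2) := key _ htpos
    _ ≤ ε * ‖ψ‖ + δ := by
        have : (δ / (C / 2 + 1)) * (C / 2) ≤ δ := by
          rw [div_mul_eq_mul_div, div_le_iff₀ hden]
          nlinarith
        linarith
end

section
/- Let X be a real Hilbert space and let a : X × X → ℝ be a continuous symmetric nonnegative bilinear form, ε > 0, h ∈ X. If φ̂ minimizes J(φ) = (1/2)a(φ,φ) + ε‖φ‖ − ⟨φ,h⟩ and y := Rφ̂ − h where R : X → X is the bounded operator satisfying ⟨Rφ, ψ⟩ = a(φ, ψ) for all φ, ψ, then ‖y‖ ≤ ε. -/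
open scoped RealInnerProductSpace

/-- If φ̂ minimizes J(φ) = (1/2)a(φ,φ) + ε‖φ‖ − ⟨φ,h⟩ for a continuous symmetric
nonnegative bilinear form a represented by the bounded operator R, then ‖Rφ̂ − h‖ ≤ ε. -/
theorem minimizer_gramian_estimate
    {X : Type*} [NormedAddCommGroup X] [InnerProductSpace ℝ X] [CompleteSpace X]
    (ε : ℝ) (hε : 0 < ε) (h : X)
    (a : X → X → ℝ) (R : X →L[ℝ] X)
    (hR : ∀ φ ψ : X, ⟪R φ, ψ⟫ = a φ ψ)
    (hsymm : ∀ φ ψ : X, a φ ψ = a ψ φ)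
    (hpos : ∀ φ : X, 0 ≤ a φ φ)
    (φhat : X)
    (hmin : ∀ φ : X, (1 / 2) * a φhat φhat + ε * ‖φhat‖ - ⟪φhat, h⟫ ≤
        (1 / 2) * a φ φ + ε * ‖φ‖ - ⟪φ, h⟫) :
    ‖R φhat - h‖ ≤ ε := by
  set y := R φhat - h with hy
  have key : ∀ ψ : X, 0 ≤ ⟪y, ψ⟫ + ε * ‖ψ‖ := by
    intro ψ
    have hyψ : ⟪y, ψ⟫ = a φhat ψ - ⟪ψ, h⟫ := by
      rw [hy, inner_sub_left, hR, real_inner_comm]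
    have H : ∀ t : ℝ, 0 < t → 0 ≤ ⟪y, ψ⟫ + ε * ‖ψ‖ + (t / 2) * a ψ ψ := by
      intro t ht
      have h1 := hmin (φhat + t • ψ)
      have ha : a (φhat + t • ψ) (φhat + t • ψ)
          = a φhat φhat + 2 * t * a φhat ψ + t ^ 2 * a ψ ψ := by
        rw [← hR (φhat + t • ψ) (φhat + t • ψ), ← hR φhat φhat, ← hR φhat ψ, ← hR ψ ψ]
        have hsym' : ⟪R ψ, φhat⟫ = ⟪R φhat, ψ⟫ := by rw [hR, hR, hsymm]
        simp only [map_add, map_smul, inner_add_left, inner_add_right,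
          real_inner_smul_left, real_inner_smul_right]
        rw [hsym']; ring
      have hn : ‖φhat + t • ψ‖ ≤ ‖φhat‖ + t * ‖ψ‖ := by
        calc ‖φhat + t • ψ‖ ≤ ‖φhat‖ + ‖t • ψ‖ := norm_add_le _ _
          _ = ‖φhat‖ + t * ‖ψ‖ := by rw [norm_smul, Real.norm_eq_abs, abs_of_pos ht]
      have hi : ⟪φhat + t • ψ, h⟫ = ⟪φhat, h⟫ + t * ⟪ψ, h⟫ := by
        rw [inner_add_left, real_inner_smul_left]
      rw [ha, hi] at h1
      have h2 : 0 ≤ t * (a φhat ψ - ⟪ψ, h⟫) + (t ^ 2 / 2) * a ψ ψ + ε * (t * ‖ψ‖) := by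
        nlinarith [h1, hn, hε.le]
      rw [hyψ]
      have := mul_le_mul_of_nonneg_left h2 (le_of_lt (inv_pos.2 ht))
      nlinarith [h2, ht]
    by_contra hc
    push_neg at hc
    rcases eq_or_lt_of_le (hpos ψ) with hK | hK
    · have := H 1 one_pos
      rw [← hK] at this
      linarith
    · set b := ⟪y, ψ⟫ + ε * ‖ψ‖ with hb
      have ht : 0 < -b / a ψ ψ := div_pos (by linarith) hK
      have := H (-b / a ψ ψ) ht
      rw [div_mul_eq_mul_div, div_mul_eq_mul_div] at this
      have : 0 ≤ b + -b / 2 := by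
        have h3 : -b / a ψ ψ / 2 * a ψ ψ = -b / 2 := by
          field_simp
        nlinarith [H (-b / a ψ ψ) ht, h3]
      linarith
  have hk := key (-y)
  rw [inner_neg_right, real_inner_self_eq_norm_sq, norm_neg] at hk
  nlinarith [norm_nonneg y, hε]
end

section
/- Let X be a Hilbert space and J_l, J : X → ℝ functionals such that J_l(φ) = G(φ) − ⟨φ, h_l⟩ and J(φ) = G(φ) − ⟨φ, h⟩ with G weakly lower semicontinuous and h_l → h strongly. Suppose φ̂_l minimizes J_l, φ̂ is the unique minimizer of J, and (φ̂_l) is bounded with φ̂_l ⇀ φ̃ weakly. Then φ̃ = φ̂ and lim_l J_l(φ̂_l) = J(φ̂). -/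
open Filter Topology
open scoped RealInnerProductSpace

/-- Γ-convergence-type identification of weak limits of minimizers (Lemmas 5 and 6). -/
theorem minimizers_weak_limit_is_minimizer
    {X : Type*} [NormedAddCommGroup X] [InnerProductSpace ℝ X] [CompleteSpace X]
    (G : X → ℝ) (hGcont : Continuous G)
    (hGwlsc : ∀ (x : ℕ → X) (x₀ : X),
      (∀ y : X, Tendsto (fun n => ⟪x n, y⟫) atTop (𝓝 ⟪x₀, y⟫)) →
        G x₀ ≤ liminf (fun n => G (x n)) atTop)
    (hl : ℕ → X) (h : X) (hstrong : Tendsto hl atTop (𝓝 h))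
    (Jl : ℕ → X → ℝ) (hJl : ∀ l φ, Jl l φ = G φ - ⟪φ, hl l⟫)
    (J : X → ℝ) (hJ : ∀ φ, J φ = G φ - ⟪φ, h⟫)
    (φhatl : ℕ → X) (hminl : ∀ l φ, Jl l (φhatl l) ≤ Jl l φ)
    (φhat : X) (hmin : ∀ φ, J φhat ≤ J φ)
    (huniq : ∀ ψ : X, (∀ φ, J ψ ≤ J φ) → ψ = φhat)
    (C : ℝ) (hbdd : ∀ l, ‖φhatl l‖ ≤ C)
    (φt : X) (hweak : ∀ y : X, Tendsto (fun l => ⟪φhatl l, y⟫) atTop (𝓝 ⟪φt, y⟫)) :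
    φt = φhat ∧ Tendsto (fun l => Jl l (φhatl l)) atTop (𝓝 (J φhat)) := by
  -- ⟪φhatl l, h - hl l⟫ → 0
  have hnorm : Tendsto (fun l => ‖h - hl l‖) atTop (𝓝 0) := by
    have : Tendsto (fun l => h - hl l) atTop (𝓝 (h - h)) :=
      tendsto_const_nhds.sub hstrong
    simpa using this.norm
  have hip0 : Tendsto (fun l => ⟪φhatl l, h - hl l⟫) atTop (𝓝 0) := by
    apply squeeze_zero_norm (fun l => ?_) (by simpa using hnorm.const_mul C)
    calc ‖⟪φhatl l, h - hl l⟫‖ = |⟪φhatl l, h - hl l⟫| := rfl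
      _ ≤ ‖φhatl l‖ * ‖h - hl l‖ := abs_real_inner_le_norm _ _
      _ ≤ C * ‖h - hl l‖ := mul_le_mul_of_nonneg_right (hbdd l) (norm_nonneg _)
  -- squeeze for Jl l (φhatl l)
  have hlowT : Tendsto (fun l => J φhat + ⟪φhatl l, h - hl l⟫) atTop (𝓝 (J φhat)) := by
    simpa using tendsto_const_nhds.add hip0
  have hupT : Tendsto (fun l => Jl l φhat) atTop (𝓝 (J φhat)) := by
    have : Tendsto (fun l => G φhat - ⟪φhat, hl l⟫) atTop (𝓝 (G φhat - ⟪φhat, h⟫)) :=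
      tendsto_const_nhds.sub (Tendsto.inner tendsto_const_nhds hstrong)
    simpa [hJl, hJ] using this
  have hlow : ∀ l, J φhat + ⟪φhatl l, h - hl l⟫ ≤ Jl l (φhatl l) := by
    intro l
    have h1 : J φhat ≤ G (φhatl l) - ⟪φhatl l, h⟫ := by
      have := hmin (φhatl l); rwa [hJ (φhatl l)] at this
    rw [hJl, inner_sub_right]
    linarith
  have htend : Tendsto (fun l => Jl l (φhatl l)) atTop (𝓝 (J φhat)) :=
    tendsto_of_tendsto_of_tendsto_of_le_of_le hlowT hupT hlow
      (fun l => hminl l φhat)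
  -- G (φhatl l) → J φhat + ⟪φt, h⟫
  have hinner : Tendsto (fun l => ⟪φhatl l, hl l⟫) atTop (𝓝 ⟪φt, h⟫) := by
    have : Tendsto (fun l => ⟪φhatl l, h⟫ - ⟪φhatl l, h - hl l⟫) atTop
        (𝓝 (⟪φt, h⟫ - 0)) := (hweak h).sub hip0
    simpa [inner_sub_right] using this
  have hG : Tendsto (fun l => G (φhatl l)) atTop (𝓝 (J φhat + ⟪φt, h⟫)) := by
    have : Tendsto (fun l => Jl l (φhatl l) + ⟪φhatl l, hl l⟫) atTop
        (𝓝 (J φhat + ⟪φt, h⟫)) := htend.add hinner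
    simpa [hJl] using this
  have hGle : G φt ≤ J φhat + ⟪φt, h⟫ := by
    have := hGwlsc φhatl φt hweak
    rwa [hG.liminf_eq] at this
  have hJt : ∀ φ, J φt ≤ J φ := by
    intro φ
    have : J φt ≤ J φhat := by rw [hJ]; linarith
    exact this.trans (hmin φ)
  exact ⟨huniq φt hJt, htend⟩
end
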